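/- Let θ > 0 and let p be any probability density on ℝ. Then 4 ∫_ℝ y² / (e^{−yθ} + e^{yθ})² p(y) dy ≤ 4/(θ² e²). In particular, for the symmetric two-component Gaussian mixture density p_{θ*}, the derivative of the population EM map M₀ at θ* satisfies M₀'(θ*) = 4 ∫ y²/(e^{−yθ*}+e^{yθ*})² p_{θ*}(y) dy ≤ 4/(θ*² e²). -/

import Mathlib

/-!
Since `1 - 2 q(y;θ) = tanh (yθ)`, the EM map is `M₀(θ) = ∫ tanh (yθ) y p(y) dy`.
Differentiating under the integral sign, with `y² p(y)` as dominating function because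
`sech² ≤ 1`, gives `M₀'(θ) = ∫ y² sech² (yθ) p(y) dy = 4 ∫ y² / (e^{-yθ} + e^{yθ})² p(y) dy`.
The bound holds already pointwise: `e^{-t} + e^t ≥ e^{|t|} ≥ e |t|`, so
`y² / (e^{-yθ} + e^{yθ})² ≤ 1 / (θ² e²)`, and integrating against a probability density
preserves it.
-/

open MeasureTheory Real ProbabilityTheory

namespace Real

lemma exp_neg_add_exp (t : ℝ) : exp (-t) + exp t = 2 * cosh t := by
  rw [cosh_eq]; ring

lemma one_sub_two_mul_one_div_one_add_exp_two_mul (t : ℝ) :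
    1 - 2 * (1 / (1 + exp (2 * t))) = tanh t := by
  have h : exp (2 * t) = exp t * exp t := by rw [← exp_add]; ring_nf
  rw [tanh_eq, h, exp_neg]
  have := exp_pos t
  field_simp
  ring

lemma hasDerivAt_tanh (t : ℝ) : HasDerivAt tanh (cosh t ^ 2)⁻¹ t := by
  have h := (hasDerivAt_sinh t).div (hasDerivAt_cosh t) (cosh_pos t).ne'
  have htanh : sinh / cosh = tanh := funext fun x => (tanh_eq_sinh_div_cosh x).symm
  rw [htanh] at h
  refine h.congr_deriv ?_
  rw [← sq, ← sq, cosh_sq_sub_sinh_sq, one_div]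

lemma continuous_tanh : Continuous tanh :=
  continuous_iff_continuousAt.2 fun t => (hasDerivAt_tanh t).continuousAt

lemma exp_one_mul_abs_le_two_mul_cosh (t : ℝ) : exp 1 * |t| ≤ 2 * cosh t :=
  calc exp 1 * |t| ≤ exp |t| := exp_one_mul_le_exp
    _ ≤ exp |t| + exp (-|t|) := le_add_of_nonneg_right (exp_pos _).le
    _ = 2 * cosh t := by rw [← cosh_abs t, cosh_eq]; ring

end Real

lemma sq_div_sq_two_mul_cosh_mul_le {θ : ℝ} (hθ : 0 < θ) (y : ℝ) :
    y ^ 2 / (2 * cosh (y * θ)) ^ 2 ≤ 1 / (θ ^ 2 * exp 1 ^ 2) := by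
  have h := pow_le_pow_left₀ (by positivity) (exp_one_mul_abs_le_two_mul_cosh (y * θ)) 2
  rw [div_le_div_iff₀ (by positivity) (by positivity)]
  rw [mul_pow, sq_abs] at h
  nlinarith

lemma integral_mul_le_of_le_of_integral_eq_one {α : Type*} [MeasurableSpace α] {μ : Measure α}
    {f p : α → ℝ} {C : ℝ} (hf0 : 0 ≤ᵐ[μ] f) (hfC : ∀ᵐ x ∂μ, f x ≤ C) (hp0 : 0 ≤ᵐ[μ] p)
    (hp1 : ∫ x, p x ∂μ = 1) :
    ∫ x, f x * p x ∂μ ≤ C := by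
  have hp : Integrable p μ := .of_integral_ne_zero (by rw [hp1]; exact one_ne_zero)
  calc ∫ x, f x * p x ∂μ ≤ ∫ x, C * p x ∂μ := by
        refine integral_mono_of_nonneg ?_ (hp.const_mul C) ?_
        · filter_upwards [hf0, hp0] with x hfx hpx using mul_nonneg hfx hpx
        · filter_upwards [hfC, hp0] with x hfx hpx
          exact mul_le_mul_of_nonneg_right hfx hpx
    _ = C := by rw [integral_const_mul, hp1, mul_one]

lemma four_mul_integral_sq_div_exp_neg_add_exp_sq_mul_le {θ : ℝ} (hθ : 0 < θ) {p : ℝ → ℝ}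
    (hp0 : 0 ≤ᵐ[volume] p) (hp1 : ∫ y, p y = 1) :
    4 * ∫ y, y ^ 2 / (exp (-(y * θ)) + exp (y * θ)) ^ 2 * p y ≤ 4 / (θ ^ 2 * exp 1 ^ 2) := by
  simp only [exp_neg_add_exp]
  have h := integral_mul_le_of_le_of_integral_eq_one (μ := volume)
    (.of_forall fun y => by positivity) (.of_forall (sq_div_sq_two_mul_cosh_mul_le hθ))
    hp0 hp1
  rw [← mul_one_div 4]
  exact mul_le_mul_of_nonneg_left h zero_le_four

lemma integrable_id_mul_of_integrable_sq_mul {p : ℝ → ℝ} (hp : Integrable p)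
    (hp2 : Integrable fun y => y ^ 2 * p y) : Integrable fun y => y * p y := by
  refine (hp.norm.add hp2.norm).mono' (aestronglyMeasurable_id.mul hp.aestronglyMeasurable)
    (.of_forall fun y => ?_)
  have hy : |y| ≤ 1 + y ^ 2 := by nlinarith [sq_abs y, abs_nonneg y, sq_nonneg (|y| - 1)]
  simp only [Pi.add_apply, norm_mul, Real.norm_eq_abs, abs_pow, sq_abs]
  nlinarith [abs_nonneg (p y)]

theorem hasDerivAt_integral_tanh_mul_mul {p : ℝ → ℝ} (hp : Integrable p)
    (hp2 : Integrable fun y => y ^ 2 * p y) (θ : ℝ) :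
    HasDerivAt (fun θ => ∫ y, tanh (y * θ) * y * p y)
      (4 * ∫ y, y ^ 2 / (exp (-(y * θ)) + exp (y * θ)) ^ 2 * p y) θ := by
  set F' : ℝ → ℝ → ℝ := fun θ y => (cosh (y * θ) ^ 2)⁻¹ * (y ^ 2 * p y)
  have hF'_eq : ∫ y, F' θ y = 4 * ∫ y, y ^ 2 / (exp (-(y * θ)) + exp (y * θ)) ^ 2 * p y := by
    rw [← integral_const_mul]
    congr 1 with y
    have := (cosh_pos (y * θ)).ne'
    simp only [F', exp_neg_add_exp]
    field_simp
    ring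
  have hF_int (θ : ℝ) : Integrable fun y => tanh (y * θ) * y * p y := by
    simp only [mul_assoc]
    exact (integrable_id_mul_of_integrable_sq_mul hp hp2).bdd_mul (c := 1)
      (continuous_tanh.comp (continuous_id.mul continuous_const)).aestronglyMeasurable
      (.of_forall fun y => (abs_tanh_lt_one _).le)
  have hF'_meas : AEStronglyMeasurable (F' θ) :=
    (by fun_prop : Measurable fun y => (cosh (y * θ) ^ 2)⁻¹).aestronglyMeasurable.mul
      hp2.aestronglyMeasurable
  have hF'_bound (y θ : ℝ) : ‖F' θ y‖ ≤ ‖y ^ 2 * p y‖ := by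
    rw [norm_mul, Real.norm_of_nonneg (by positivity)]
    exact mul_le_of_le_one_left (norm_nonneg _)
      (inv_le_one_of_one_le₀ (one_le_pow₀ (one_le_cosh _)))
  have hF_deriv (y θ : ℝ) : HasDerivAt (fun θ => tanh (y * θ) * y * p y) (F' θ y) θ := by
    have := ((hasDerivAt_tanh (y * θ)).comp θ ((hasDerivAt_id θ).const_mul y)).mul_const y
    simpa [F', sq, mul_assoc] using this.mul_const (p y)
  rw [← hF'_eq]
  exact (hasDerivAt_integral_of_dominated_loc_of_deriv_le Filter.univ_mem
    (.of_forall fun θ => (hF_int θ).aestronglyMeasurable) (hF_int θ) hF'_meas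
    (.of_forall fun y θ _ => hF'_bound y θ) hp2.norm (.of_forall fun y θ _ => hF_deriv y θ)).2

lemma integrable_sq_mul_gaussianPDFReal (μ : ℝ) (v : NNReal) :
    Integrable fun x => x ^ 2 * gaussianPDFReal μ v x := by
  by_cases hv : v = 0
  · simp [hv]
  have h := (memLp_id_gaussianReal (μ := μ) (v := v) 2).integrable_sq
  rw [gaussianReal_of_var_ne_zero _ hv, integrable_withDensity_iff (measurable_gaussianPDF μ v)
    (.of_forall fun _ => gaussianPDF_lt_top)] at h
  simpa only [toReal_gaussianPDF, id_eq] using h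

noncomputable def gaussianMixturePDF (θ : ℝ) (y : ℝ) : ℝ :=
  (gaussianPDFReal θ 1 y + gaussianPDFReal (-θ) 1 y) / 2

lemma gaussianMixturePDF_eq (θ : ℝ) :
    gaussianMixturePDF θ =
      fun y => (1 / (2 * √(2 * π))) * (exp (-(y - θ) ^ 2 / 2) + exp (-(y + θ) ^ 2 / 2)) := by
  ext y
  simp only [gaussianMixturePDF, gaussianPDFReal, NNReal.coe_one, mul_one, sub_neg_eq_add]
  ring

lemma gaussianMixturePDF_nonneg (θ y : ℝ) : 0 ≤ gaussianMixturePDF θ y := by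
  unfold gaussianMixturePDF
  have := gaussianPDFReal_nonneg θ 1 y
  have := gaussianPDFReal_nonneg (-θ) 1 y
  positivity

lemma integrable_gaussianMixturePDF (θ : ℝ) : Integrable (gaussianMixturePDF θ) :=
  ((integrable_gaussianPDFReal θ 1).add (integrable_gaussianPDFReal (-θ) 1)).div_const 2

lemma integrable_sq_mul_gaussianMixturePDF (θ : ℝ) :
    Integrable fun y => y ^ 2 * gaussianMixturePDF θ y := by
  simp only [gaussianMixturePDF, mul_div_assoc', mul_add]
  exact ((integrable_sq_mul_gaussianPDFReal θ 1).add
    (integrable_sq_mul_gaussianPDFReal (-θ) 1)).div_const 2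

lemma integral_gaussianMixturePDF (θ : ℝ) : ∫ y, gaussianMixturePDF θ y = 1 := by
  simp only [gaussianMixturePDF]
  rw [integral_div,
    integral_add (integrable_gaussianPDFReal θ 1) (integrable_gaussianPDFReal (-θ) 1),
    integral_gaussianPDFReal_eq_one θ one_ne_zero,
    integral_gaussianPDFReal_eq_one (-θ) one_ne_zero]
  norm_num

/-- for any probability density `p` on `ℝ` and `θ > 0`,
`4 ∫ y² / (e^{−yθ} + e^{yθ})² p(y) dy ≤ 4/(θ² e²)`; in particular the derivative
of the population EM map `M₀` of the symmetric two-Gaussian mixture at `θstar`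
equals that integral (for `p = p_{θstar}`) and is bounded by `4/(θstar² e²)`. -/
theorem em_map_derivative_bound
    (θ : ℝ) (hθ : 0 < θ)
    (p : ℝ → ℝ) (hp0 : ∀ y, 0 ≤ p y) (hp1 : ∫ y : ℝ, p y = 1)
    (θstar : ℝ) (hθstar : 0 < θstar)
    (pstar : ℝ → ℝ)
    (hpstar : pstar = fun y => (1 / (2 * Real.sqrt (2 * Real.pi))) *
      (Real.exp (-(y - θstar) ^ 2 / 2) + Real.exp (-(y + θstar) ^ 2 / 2)))
    (q : ℝ → ℝ → ℝ)
    (hq : q = fun θ' y => 1 / (1 + Real.exp (2 * y * θ')))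
    (M0 : ℝ → ℝ)
    (hM0 : M0 = fun θ' => ∫ y : ℝ, (1 - 2 * q θ' y) * y * pstar y) :
    (4 * ∫ y : ℝ, y ^ 2 / (Real.exp (-(y * θ)) + Real.exp (y * θ)) ^ 2 * p y)
        ≤ 4 / (θ ^ 2 * Real.exp 1 ^ 2) ∧
    deriv M0 θstar = 4 * ∫ y : ℝ,
        y ^ 2 / (Real.exp (-(y * θstar)) + Real.exp (y * θstar)) ^ 2 * pstar y ∧
    deriv M0 θstar ≤ 4 / (θstar ^ 2 * Real.exp 1 ^ 2) := by
  rw [← gaussianMixturePDF_eq] at hpstar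
  subst hpstar
  have hM0_tanh : M0 = fun θ' => ∫ y, tanh (y * θ') * y * gaussianMixturePDF θstar y := by
    simp only [hM0, hq, mul_assoc (2 : ℝ), one_sub_two_mul_one_div_one_add_exp_two_mul]
  have hderiv : deriv M0 θstar = _ := hM0_tanh ▸
    (hasDerivAt_integral_tanh_mul_mul (integrable_gaussianMixturePDF θstar)
      (integrable_sq_mul_gaussianMixturePDF θstar) θstar).deriv
  refine ⟨four_mul_integral_sq_div_exp_neg_add_exp_sq_mul_le hθ (.of_forall hp0) hp1, hderiv, ?_⟩
  rw [hderiv]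
  exact four_mul_integral_sq_div_exp_neg_add_exp_sq_mul_le hθstar
    (.of_forall (gaussianMixturePDF_nonneg θstar)) (integral_gaussianMixturePDF θstar)
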